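/- Linear independence satisfies Base-Monotonicity: if A ⫝_C B in a K-vector space V and C ⊆ C' ⊆ B, then A ⫝_{C'} B. -/

import Mathlib

/-- The linear independence relation: `A` is independent from `B` over `C` in the
`K`-vector space `V`. -/
def Indep (K : Type*) {V : Type*} [Field K] [AddCommGroup V] [Module K V]
    (A C B : Set V) : Prop :=
  Submodule.span K (A ∪ C) ⊓ Submodule.span K (B ∪ C) = Submodule.span K C

theorem sup_inf_eq_of_inf_eq {α : Type*} [Lattice α] [IsModularLattice α]
    {a b c c' : α} (h : a ⊓ b = c) (hc : c ≤ c') (hc' : c' ≤ b) : (a ⊔ c') ⊓ b = c' := by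
  rw [sup_comm, sup_inf_assoc_of_le a hc', h, sup_eq_left.mpr hc]

theorem indep_iff_of_subset {K V : Type*} [Field K] [AddCommGroup V] [Module K V]
    {A B C : Set V} (hCB : C ⊆ B) :
    Indep K A C B ↔ Submodule.span K (A ∪ C) ⊓ Submodule.span K B = Submodule.span K C := by
  rw [Indep, Set.union_eq_self_of_subset_right hCB]

theorem indep_base_monotonicity {K V : Type*} [Field K] [AddCommGroup V] [Module K V]
    (A B C C' : Set V) (h : Indep K A C B) (hC : C ⊆ C') (hC' : C' ⊆ B) :
    Indep K A C' B := by
  rw [indep_iff_of_subset (hC.trans hC')] at h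
  rw [indep_iff_of_subset hC']
  have hAC' : A ∪ C' = (A ∪ C) ∪ C' := by
    rw [Set.union_assoc, Set.union_eq_self_of_subset_left hC]
  rw [hAC', Submodule.span_union]
  exact sup_inf_eq_of_inf_eq h (Submodule.span_mono hC) (Submodule.span_mono hC')
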